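/- arXiv:1109.0741 — 7 statements merged into one kernel-verified Lean document; each statement's English description precedes it below -/
import Mathlib

section
/- For all real x ≥ 0 and all d with 0 < d ≤ v/4 (where v > 0), one has x·min(x, d) ≥ x^2 − (v^3/(4d))·g(x/v), where g(x) = min(x^2, |x|^3). -/
theorem stmt_1 (v : ℝ) (hv : 0 < v) (d : ℝ) (hd : 0 < d) (hdv : d ≤ v / 4)
    (x : ℝ) (hx : 0 ≤ x) :
    x * min x d ≥ x ^ 2 - (v ^ 3 / (4 * d)) * min ((x / v) ^ 2) (|x / v| ^ 3) := by
  rw [abs_of_nonneg (div_nonneg hx hv.le)]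
  rcases le_or_gt x d with h | h
  · rw [min_eq_left h]
    have hm : 0 ≤ min ((x / v) ^ 2) ((x / v) ^ 3) := by
      refine le_min (by positivity) (by positivity)
    have hc : 0 < v ^ 3 / (4 * d) := by positivity
    nlinarith [mul_nonneg hc.le hm]
  · rw [min_eq_right h.le]
    rcases le_or_gt x v with hxv | hxv
    · have hle : (x / v) ^ 3 ≤ (x / v) ^ 2 := by
        have h1 : x / v ≤ 1 := div_le_one_of_le₀ hxv hv.le
        have h0 : 0 ≤ x / v := div_nonneg hx hv.le
        nlinarith
      rw [min_eq_right hle]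
      have key : x ^ 2 - v ^ 3 / (4 * d) * (x / v) ^ 3 = x ^ 2 - x ^ 3 / (4 * d) := by
        field_simp
      rw [key]
      rw [ge_iff_le, sub_le_iff_le_add, ← sub_le_iff_le_add', le_div_iff₀ (by positivity : (0:ℝ) < 4 * d)]
      nlinarith [mul_nonneg hx (sq_nonneg (x - 2 * d))]
    · have hge : (x / v) ^ 2 ≤ (x / v) ^ 3 := by
        have h1 : 1 ≤ x / v := (one_le_div hv).mpr hxv.le
        nlinarith
      rw [min_eq_left hge]
      have key : v ^ 3 / (4 * d) * (x / v) ^ 2 = v * x ^ 2 / (4 * d) := by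
        field_simp
      rw [key]
      have h4d : 4 * d ≤ v := by linarith
      rw [ge_iff_le, sub_le_iff_le_add, ← sub_le_iff_le_add', le_div_iff₀ (by positivity : (0:ℝ) < 4 * d)]
      nlinarith [mul_nonneg (sub_nonneg.mpr h4d) (sq_nonneg x), mul_nonneg hd.le (mul_nonneg hd.le hx)]
end

section
/- Let X be a real random variable with E X = 0 and E X^2 ≤ 1, let v > 0, and set β := E g(X/v) where g(x) = min(x^2, |x|^3). If β ≤ (8/9)^3, then E|X| ≤ v · β^{1/3}. -/
open MeasureTheory

lemma pointwise_bound (y α : ℝ) (hα : 0 < α) (hα' : α ≤ 8/9) :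
    |y| ≤ 2*α/3 + min (y^2) (|y|^3) / (3*α^2) := by
  have h3 : (0:ℝ) < 3*α^2 := by positivity
  rw [← sub_le_iff_le_add', le_div_iff₀ h3]
  refine le_min ?_ ?_
  · nlinarith [sq_nonneg (2*|y| - 3*α^2), sq_abs y, abs_nonneg y,
      mul_nonneg (pow_nonneg hα.le 3) (by linarith : (0:ℝ) ≤ 8 - 9*α)]
  · nlinarith [mul_nonneg (sq_nonneg (|y| - α)) (by positivity : (0:ℝ) ≤ |y| + 2*α)]

theorem stmt_5 {Ω : Type*} [MeasurableSpace Ω] (μ : Measure Ω) [IsProbabilityMeasure μ]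
    (X : Ω → ℝ) (hXm : Measurable X)
    (hX1 : Integrable X μ) (hX2 : Integrable (fun ω => X ω ^ 2) μ)
    (hmean : ∫ ω, X ω ∂μ = 0) (hvar : ∫ ω, X ω ^ 2 ∂μ ≤ 1)
    (v : ℝ) (hv : 0 < v)
    (β : ℝ) (hβ : β = ∫ ω, min ((X ω / v) ^ 2) (|X ω / v| ^ 3) ∂μ)
    (hβ' : β ≤ (8/9 : ℝ) ^ 3) :
    ∫ ω, |X ω| ∂μ ≤ v * β ^ ((1:ℝ)/3) := by
  have hYm : Measurable fun ω => X ω / v := hXm.div_const v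
  have hYsq : Integrable (fun ω => (X ω / v)^2) μ := by
    simpa [div_pow] using hX2.div_const (v^2)
  have hg_int : Integrable (fun ω => min ((X ω / v)^2) (|X ω / v|^3)) μ := by
    refine hYsq.mono ?_ ?_
    · exact ((hYm.pow_const 2).min (hYm.abs.pow_const 3)).aestronglyMeasurable
    · filter_upwards with ω
      have h0 : (0:ℝ) ≤ min ((X ω / v)^2) (|X ω / v|^3) :=
        le_min (sq_nonneg _) (by positivity)
      rw [Real.norm_eq_abs, Real.norm_eq_abs, abs_of_nonneg h0]
      exact (min_le_left _ _).trans (le_abs_self _)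
  have hβ0 : 0 ≤ β := by
    rw [hβ]
    exact integral_nonneg fun ω => le_min (sq_nonneg _) (by positivity)
  have habs_int : Integrable (fun ω => |X ω / v|) μ := (hX1.div_const v).abs
  have key : ∀ α : ℝ, 0 < α → α ≤ 8/9 →
      ∫ ω, |X ω / v| ∂μ ≤ 2*α/3 + β/(3*α^2) := by
    intro α h1 h2
    calc ∫ ω, |X ω / v| ∂μ
        ≤ ∫ ω, (2*α/3 + min ((X ω / v)^2) (|X ω / v|^3) / (3*α^2)) ∂μ :=
          integral_mono habs_int ((integrable_const _).add (hg_int.div_const _))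
            (fun ω => pointwise_bound _ _ h1 h2)
      _ = 2*α/3 + β/(3*α^2) := by
          rw [integral_add (integrable_const _) (hg_int.div_const _), integral_const,
            integral_div, hβ]
          simp
  have hIX : ∫ ω, |X ω| ∂μ = v * ∫ ω, |X ω / v| ∂μ := by
    rw [← integral_const_mul]
    congr 1
    funext ω
    rw [abs_div, abs_of_pos hv]
    field_simp
  rcases eq_or_lt_of_le hβ0 with h0 | h0
  · rw [← h0, Real.zero_rpow (by norm_num), mul_zero, hIX]
    have hle : ∫ ω, |X ω / v| ∂μ ≤ 0 := by
      refine le_of_forall_pos_le_add fun ε hε => ?_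
      have hαpos : (0:ℝ) < min (3*ε/2) (8/9) := lt_min (by linarith) (by norm_num)
      have := key _ hαpos (min_le_right _ _)
      have h2 : 2 * min (3*ε/2) (8/9) / 3 ≤ ε := by
        have := min_le_left (3*ε/2) (8/9); linarith
      rw [← h0] at this
      simp only [zero_div, add_zero] at this
      linarith
    exact mul_nonpos_of_nonneg_of_nonpos hv.le hle
  · set α := β ^ ((1:ℝ)/3) with hαdef
    have hα : 0 < α := Real.rpow_pos_of_pos h0 _
    have hα' : α ≤ 8/9 := by
      calc α ≤ ((8/9:ℝ)^3) ^ ((1:ℝ)/3) := Real.rpow_le_rpow hβ0 hβ' (by norm_num)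
        _ = 8/9 := by
          rw [← Real.rpow_natCast (8/9 : ℝ) 3, ← Real.rpow_mul (by norm_num)]
          norm_num
    have hcube : α^3 = β := by
      rw [hαdef, ← Real.rpow_natCast (β ^ ((1:ℝ)/3)) 3, ← Real.rpow_mul hβ0]
      norm_num
    have hkey := key α hα hα'
    have heq : 2*α/3 + β/(3*α^2) = α := by
      rw [← hcube]; field_simp; ring
    rw [hIX]
    rw [heq] at hkey
    exact mul_le_mul_of_nonneg_left hkey hv.le
end

section
/- Let ξ_1, …, ξ_n be independent real random variables, S := ξ_1 + ⋯ + ξ_n, and w < y real numbers. Then P(S > z, y ≥ max_i ξ_i and max_i ξ_i > w) ≤ Σ_i P(S − ξ_i > z − y, max_{j≠i} ξ_j ≤ y) · P(ξ_i > w) for every real z. -/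
/-!
On the event, some `ξ i > w` and every `ξ j ≤ y`, so `S - ξ i > z - y` and `max_{j ≠ i} ξ j ≤ y`.
A union bound over `i` then reduces the claim to the independence of `ξ i` from `(ξ j)_{j ≠ i}`.
-/

open MeasureTheory ProbabilityTheory

lemma Fintype.sum_sub_eq_sum_compl_singleton {ι M : Type*} [Fintype ι] [DecidableEq ι]
    [AddCommGroup M] (f : ι → M) (i : ι) :
    (∑ j, f j) - f i = ∑ j : ({i}ᶜ : Finset ι), f j := by
  rw [Finset.sum_coe_sort, Fintype.sum_eq_add_sum_compl i, add_sub_cancel_left]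

namespace ProbabilityTheory

variable {Ω ι : Type*} [MeasurableSpace Ω] {μ : Measure Ω} [Fintype ι] [DecidableEq ι]

lemma iIndepFun.indepFun_compl_singleton {β : Type*} [MeasurableSpace β] {ξ : ι → Ω → β}
    (hind : iIndepFun ξ μ) (hmeas : ∀ i, Measurable (ξ i)) (i : ι) :
    IndepFun (fun ω (j : ({i}ᶜ : Finset ι)) ↦ ξ j ω) (ξ i) μ := by
  exact (hind.indepFun_finset {i}ᶜ {i} disjoint_compl_left hmeas).comp measurable_id
    (measurable_pi_apply (⟨i, Finset.mem_singleton_self i⟩ : ({i} : Finset ι)))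

lemma iIndepFun.measure_sum_sub_gt_and_le_inter_gt {ξ : ι → Ω → ℝ}
    (hind : iIndepFun ξ μ) (hmeas : ∀ i, Measurable (ξ i)) (i : ι) (a y w : ℝ) :
    μ ({ω | a < (∑ j, ξ j ω) - ξ i ω ∧ ∀ j ≠ i, ξ j ω ≤ y} ∩ {ω | w < ξ i ω}) =
      μ {ω | a < (∑ j, ξ j ω) - ξ i ω ∧ ∀ j ≠ i, ξ j ω ≤ y} * μ {ω | w < ξ i ω} := by
  set s : Set (({i}ᶜ : Finset ι) → ℝ) := {v | a < ∑ j, v j} ∩ ⋂ j, {v | v j ≤ y}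
  have hs : MeasurableSet s :=
    (measurableSet_lt measurable_const (Finset.measurable_sum _ fun j _ ↦
      measurable_pi_apply j)).inter
      (.iInter fun j ↦ measurableSet_le (measurable_pi_apply j) measurable_const)
  have hpre : {ω | a < (∑ j, ξ j ω) - ξ i ω ∧ ∀ j ≠ i, ξ j ω ≤ y} =
      (fun ω (j : ({i}ᶜ : Finset ι)) ↦ ξ j ω) ⁻¹' s := by
    ext ω
    simp [s, Fintype.sum_sub_eq_sum_compl_singleton (ξ · ω) i]
  rw [hpre]
  exact (hind.indepFun_compl_singleton hmeas i).measure_inter_preimage_eq_mul _ _ hs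
    measurableSet_Ioi

end ProbabilityTheory

theorem stmt_9_general {Ω : Type*} [MeasurableSpace Ω] (μ : Measure Ω) [IsProbabilityMeasure μ]
    (n : ℕ) (ξ : Fin n → Ω → ℝ) (hmeas : ∀ i, Measurable (ξ i))
    (hind : iIndepFun ξ μ)
    (w y z : ℝ) :
    (μ {ω | z < ∑ i, ξ i ω ∧ (∀ i, ξ i ω ≤ y) ∧ (∃ i, w < ξ i ω)}).toReal ≤
      ∑ i, (μ {ω | z - y < (∑ j, ξ j ω) - ξ i ω ∧ ∀ j ≠ i, ξ j ω ≤ y}).toReal *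
            (μ {ω | w < ξ i ω}).toReal := by
  set A := fun i ↦ {ω | z - y < (∑ j, ξ j ω) - ξ i ω ∧ ∀ j ≠ i, ξ j ω ≤ y}
  set B := fun i ↦ {ω | w < ξ i ω}
  have hcover : {ω | z < ∑ i, ξ i ω ∧ (∀ i, ξ i ω ≤ y) ∧ (∃ i, w < ξ i ω)} ⊆
      ⋃ i, A i ∩ B i := by
    rintro ω ⟨hsum, hle, i, hi⟩
    exact Set.mem_iUnion.2 ⟨i, ⟨by linarith [hle i], fun j _ ↦ hle j⟩, hi⟩
  calc μ.real _ ≤ μ.real (⋃ i, A i ∩ B i) := measureReal_mono hcover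
    _ ≤ ∑ i, μ.real (A i ∩ B i) := measureReal_iUnion_fintype_le _
    _ = ∑ i, μ.real (A i) * μ.real (B i) := by
      simp only [measureReal_def, A, B, hind.measure_sum_sub_gt_and_le_inter_gt hmeas,
        ENNReal.toReal_mul]

theorem stmt_9 {Ω : Type*} [MeasurableSpace Ω] (μ : Measure Ω) [IsProbabilityMeasure μ]
    (n : ℕ) (ξ : Fin n → Ω → ℝ) (hmeas : ∀ i, Measurable (ξ i))
    (hind : iIndepFun ξ μ)
    (w y z : ℝ) (hwy : w < y) :
    (μ {ω | z < ∑ i, ξ i ω ∧ (∀ i, ξ i ω ≤ y) ∧ (∃ i, w < ξ i ω)}).toReal ≤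
      ∑ i, (μ {ω | z - y < (∑ j, ξ j ω) - ξ i ω ∧ ∀ j ≠ i, ξ j ω ≤ y}).toReal *
            (μ {ω | w < ξ i ω}).toReal :=
  stmt_9_general μ n ξ hmeas hind w y z
end

section
/- Let ξ_1, …, ξ_n be independent real random variables and w ∈ ℝ. If P(max_i ξ_i > w) < 1, then Σ_{i=1}^n P(ξ_i > w) ≤ P(max_i ξ_i > w) / (1 − P(max_i ξ_i > w)). -/
/-!
Let `E i = {ξ i > w}` and `U = ⋃ i, E i`. The events "`E i` occurs and no other `E j` does" are
pairwise disjoint subsets of `U`, and by independence the `i`-th one has probability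
`P(E i) * ∏_{j ≠ i} P(E jᶜ) ≥ P(E i) * ∏_j P(E jᶜ) = P(E i) * (1 - P(U))`.
Summing over `i` gives `(∑ i, P(E i)) * (1 - P(U)) ≤ P(U)`.
-/

open MeasureTheory ProbabilityTheory MeasurableSpace

section

variable {ι Ω : Type*} [MeasurableSpace Ω] {μ : Measure Ω}

lemma ProbabilityTheory.iIndepFun.iIndepSet_preimage {β : ι → Type*}
    {m : ∀ i, MeasurableSpace (β i)} {f : ∀ i, Ω → β i} (hf : iIndepFun f μ)
    {A : ∀ i, Set (β i)} (hA : ∀ i, MeasurableSet (A i)) :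
    iIndepSet (fun i ↦ f i ⁻¹' A i) μ := by
  refine (iIndepSet_iff _ _).2 fun s g hg ↦ (iIndepFun_iff _ _ _).1 hf s fun i hi ↦ ?_
  exact generateFrom_le (by rintro _ rfl; exact ⟨A i, hA i, rfl⟩) _ (hg i hi)

lemma MeasureTheory.sum_measure_sdiff_iUnion_ne_le [Fintype ι] {E : ι → Set Ω}
    (hE : ∀ i, MeasurableSet (E i)) :
    ∑ i, μ (E i \ ⋃ j ≠ i, E j) ≤ μ (⋃ i, E i) := by
  have hdisj : Pairwise (Function.onFun Disjoint fun i ↦ E i \ ⋃ j ≠ i, E j) :=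
    fun i _ hik ↦
      Set.disjoint_left.2 fun _ hi hk ↦ hk.2 <| Set.mem_iUnion₂.2 ⟨i, hik, hi.1⟩
  calc ∑ i, μ (E i \ ⋃ j ≠ i, E j) = μ (⋃ i ∈ Finset.univ, E i \ ⋃ j ≠ i, E j) :=
        (measure_biUnion_finset (hdisj.set_pairwise _) fun i _ ↦
          (hE i).diff (.iUnion fun j ↦ .iUnion fun _ ↦ hE j)).symm
    _ ≤ μ (⋃ i, E i) :=
        measure_mono <| Set.iUnion₂_subset fun i _ ↦
          Set.sdiff_subset.trans (Set.subset_iUnion E i)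

namespace ProbabilityTheory.iIndepSet

variable [Fintype ι] {E : ι → Set Ω}

lemma measure_mul_measure_compl_iUnion_le (h : iIndepSet E μ) (i : ι) :
    μ (E i) * μ (⋃ j, E j)ᶜ ≤ μ (E i \ ⋃ j ≠ i, E j) := by
  classical
  have := h.isProbabilityMeasure
  have hmeas : ∀ j, MeasurableSet[generateFrom {E j}] (E j) :=
    fun j ↦ measurableSet_generateFrom rfl
  have hprod (s : ι → Set Ω) (hs : ∀ j, MeasurableSet[generateFrom {E j}] (s j)) :
      μ (⋂ j, s j) = ∏ j, μ (s j) := by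
    simpa using (iIndepSet_iff _ _).1 h Finset.univ fun j _ ↦ hs j
  have hcompl : μ (⋃ j, E j)ᶜ = μ (E i)ᶜ * ∏ j ∈ Finset.univ.erase i, μ (E j)ᶜ := by
    rw [Set.compl_iUnion, hprod _ fun j ↦ (hmeas j).compl,
      ← Finset.mul_prod_erase _ _ (Finset.mem_univ i)]
  have honly :
      μ (E i \ ⋃ j ≠ i, E j) = μ (E i) * ∏ j ∈ Finset.univ.erase i, μ (E j)ᶜ := by
    have : E i \ ⋃ j ≠ i, E j = ⋂ j, if j = i then E j else (E j)ᶜ := by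
      ext ω
      simp only [Set.mem_sdiff, Set.mem_iUnion, Set.mem_iInter, exists_prop, not_exists,
        not_and]
      refine ⟨fun ⟨hi, hne⟩ j ↦ ?_,
        fun hω ↦ ⟨by simpa using hω i, fun j hj ↦ by simpa [hj] using hω j⟩⟩
      split_ifs with hj
      exacts [hj ▸ hi, hne j hj]
    rw [this, hprod _ fun j ↦ by split_ifs; exacts [hmeas j, (hmeas j).compl],
      ← Finset.mul_prod_erase _ _ (Finset.mem_univ i), if_pos rfl]
    congr 1
    exact Finset.prod_congr rfl fun j hj ↦ by rw [if_neg (Finset.ne_of_mem_erase hj)]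
  rw [hcompl, honly]
  gcongr
  exact mul_le_of_le_one_left' prob_le_one

lemma sum_measure_mul_measure_compl_iUnion_le (h : iIndepSet E μ)
    (hE : ∀ i, MeasurableSet (E i)) :
    (∑ i, μ (E i)) * μ (⋃ i, E i)ᶜ ≤ μ (⋃ i, E i) :=
  calc (∑ i, μ (E i)) * μ (⋃ i, E i)ᶜ = ∑ i, μ (E i) * μ (⋃ j, E j)ᶜ :=
        Finset.sum_mul ..
    _ ≤ ∑ i, μ (E i \ ⋃ j ≠ i, E j) :=
        Finset.sum_le_sum fun i _ ↦ h.measure_mul_measure_compl_iUnion_le i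
    _ ≤ μ (⋃ i, E i) := sum_measure_sdiff_iUnion_ne_le hE

lemma sum_measureReal_le_div (h : iIndepSet E μ) (hE : ∀ i, MeasurableSet (E i))
    (hlt : μ.real (⋃ i, E i) < 1) :
    ∑ i, μ.real (E i) ≤ μ.real (⋃ i, E i) / (1 - μ.real (⋃ i, E i)) := by
  have := h.isProbabilityMeasure
  rw [le_div_iff₀ (sub_pos.2 hlt), ← probReal_compl_eq_one_sub (.iUnion hE)]
  have key := ENNReal.toReal_mono (measure_ne_top μ _)
    (h.sum_measure_mul_measure_compl_iUnion_le hE)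
  rwa [ENNReal.toReal_mul, ENNReal.toReal_sum fun i _ ↦ measure_ne_top μ _] at key

end ProbabilityTheory.iIndepSet

end

theorem stmt_10_general {Ω : Type*} [MeasurableSpace Ω] (μ : Measure Ω)
    (n : ℕ) (ξ : Fin n → Ω → ℝ) (hmeas : ∀ i, Measurable (ξ i))
    (hind : iIndepFun ξ μ)
    (w : ℝ) (h1 : (μ {ω | ∃ i, w < ξ i ω}).toReal < 1) :
    ∑ i, (μ {ω | w < ξ i ω}).toReal ≤
      (μ {ω | ∃ i, w < ξ i ω}).toReal / (1 - (μ {ω | ∃ i, w < ξ i ω}).toReal) := by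
  have hU : {ω | ∃ i, w < ξ i ω} = ⋃ i, ξ i ⁻¹' Set.Ioi w := by ext; simp
  rw [hU] at h1 ⊢
  exact (hind.iIndepSet_preimage fun _ ↦ measurableSet_Ioi).sum_measureReal_le_div
    (fun i ↦ hmeas i measurableSet_Ioi) h1

theorem stmt_10 {Ω : Type*} [MeasurableSpace Ω] (μ : Measure Ω) [IsProbabilityMeasure μ]
    (n : ℕ) (ξ : Fin n → Ω → ℝ) (hmeas : ∀ i, Measurable (ξ i))
    (hind : iIndepFun ξ μ)
    (w : ℝ) (h1 : (μ {ω | ∃ i, w < ξ i ω}).toReal < 1) :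
    ∑ i, (μ {ω | w < ξ i ω}).toReal ≤
      (μ {ω | ∃ i, w < ξ i ω}).toReal / (1 - (μ {ω | ∃ i, w < ξ i ω}).toReal) :=
  stmt_10_general μ n ξ hmeas hind w h1
end

section
/- Let ξ_1, …, ξ_n be independent real random variables with the setup of the preceding context, S their sum, S̄ the sum of the ξ̄_i, and suppose ξ̄_i ≤ ξ_i a.s. with ξ̄_i = ξ_i on {ξ_i ≤ w}. For y ∈ ℝ define Q(z,y) := max_i P(S − ξ_i > z − y, max_{j≠i} ξ_j ≤ y) and Q_*(z,y) := max(Q(z,y), P(S > z, max_j ξ_j ≤ y)). Then for all z and all y > w: P(S > z) − P(S̄ > z) ≤ P(max_i ξ_i > y) + 2·Q_*(z,y)·P(max_i ξ_i > w). -/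
open MeasureTheory ProbabilityTheory

/-!
If all `ξ i ≤ w` then `S̄ = S`, so up to the event `{max ξ > y}` the difference is carried by
`X = {S > z, max ξ ≤ y, max ξ > w}`. If `P(max ξ > w) ≥ 1/2` it suffices that
`P(X) ≤ P(S > z, max ξ ≤ y) ≤ Q_*`. Otherwise, a union bound over an index `i` with `ξ i > w`,
together with the independence of `ξ i` from the other variables, gives
`P(X) ≤ Q · ∑ pᵢ` with `pᵢ = P(ξ i > w)`; and `∑ pᵢ ≤ 2 (1 - ∏ (1 - pᵢ)) = 2 P(max ξ > w)`
as soon as `∏ (1 - pᵢ) ≥ 1/2`.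
-/

lemma prod_one_sub_mul_sum_le_one_sub_prod {ι : Type*} (s : Finset ι) {p : ι → ℝ}
    (h0 : ∀ i ∈ s, 0 ≤ p i) (h1 : ∀ i ∈ s, p i ≤ 1) :
    (∏ i ∈ s, (1 - p i)) * ∑ i ∈ s, p i ≤ 1 - ∏ i ∈ s, (1 - p i) := by
  classical
  induction s using Finset.induction_on with
  | empty => simp
  | @insert a s ha ih =>
    simp only [Finset.mem_insert, forall_eq_or_imp] at h0 h1
    rw [Finset.prod_insert ha, Finset.sum_insert ha]
    have hP0 : 0 ≤ ∏ i ∈ s, (1 - p i) := Finset.prod_nonneg fun i hi => by linarith [h1.2 i hi]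
    have hP1 : ∏ i ∈ s, (1 - p i) ≤ 1 :=
      Finset.prod_le_one (fun i hi => by linarith [h1.2 i hi]) (fun i hi => by linarith [h0.2 i hi])
    have := mul_le_mul_of_nonneg_left (ih h0.2 h1.2) (sub_nonneg.2 h1.1)
    nlinarith [mul_nonneg hP0 h0.1, mul_nonneg h0.1 (sub_nonneg.2 hP1)]

lemma sum_le_two_mul_one_sub_prod {ι : Type*} (s : Finset ι) {p : ι → ℝ}
    (h0 : ∀ i ∈ s, 0 ≤ p i) (h1 : ∀ i ∈ s, p i ≤ 1) (hhalf : 1 / 2 ≤ ∏ i ∈ s, (1 - p i)) :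
    ∑ i ∈ s, p i ≤ 2 * (1 - ∏ i ∈ s, (1 - p i)) := by
  have := prod_one_sub_mul_sum_le_one_sub_prod s h0 h1
  nlinarith [Finset.sum_nonneg h0]

namespace ProbabilityTheory

variable {Ω ι : Type*} [MeasurableSpace Ω] {μ : Measure Ω} [Fintype ι]

lemma iIndepFun.measure_inter_preimage_erase [DecidableEq ι] {β : Type*} [MeasurableSpace β]
    {ξ : ι → Ω → β} (hind : iIndepFun ξ μ) (hmeas : ∀ i, Measurable (ξ i)) (i : ι)
    {t : Set (Finset.univ.erase i → β)} (ht : MeasurableSet t) {s : Set β} (hs : MeasurableSet s) :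
    μ ((fun ω (j : Finset.univ.erase i) => ξ j ω) ⁻¹' t ∩ ξ i ⁻¹' s) =
      μ ((fun ω (j : Finset.univ.erase i) => ξ j ω) ⁻¹' t) * μ (ξ i ⁻¹' s) := by
  have hindep := (hind.indepFun_finset (Finset.univ.erase i) {i} (by simp) hmeas).comp
    measurable_id (measurable_pi_apply ⟨i, Finset.mem_singleton_self i⟩)
  exact hindep.measure_inter_preimage_eq_mul _ _ ht hs

variable {ξ : ι → Ω → ℝ}

lemma iIndepFun.measureReal_exists_lt (hind : iIndepFun ξ μ) (hmeas : ∀ i, Measurable (ξ i))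
    (c : ℝ) : μ.real {ω | ∃ i, c < ξ i ω} = 1 - ∏ i, (1 - μ.real {ω | c < ξ i ω}) := by
  have := hind.isProbabilityMeasure
  have hcompl : {ω | ∃ i, c < ξ i ω} = (⋂ i, ξ i ⁻¹' Set.Iic c)ᶜ := by ext; simp
  have hmeas_le : ∀ i, MeasurableSet (ξ i ⁻¹' Set.Iic c) := fun i => hmeas i measurableSet_Iic
  have hmeas_lt : ∀ i, MeasurableSet {ω | c < ξ i ω} := fun i => hmeas i measurableSet_Ioi
  have hle : ∀ i, μ.real (ξ i ⁻¹' Set.Iic c) = 1 - μ.real {ω | c < ξ i ω} := fun i => by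
    rw [← probReal_compl_eq_one_sub (hmeas_lt i)]; congr 1; ext; simp
  rw [hcompl, probReal_compl_eq_one_sub (MeasurableSet.iInter hmeas_le), measureReal_def,
    hind.meas_iInter fun i => ⟨Set.Iic c, measurableSet_Iic, rfl⟩, ENNReal.toReal_prod]
  simp_rw [← measureReal_def, hle]

lemma iIndepFun.measureReal_sub_inter_lt (hind : iIndepFun ξ μ) (hmeas : ∀ i, Measurable (ξ i))
    (i : ι) (a b c : ℝ) :
    μ.real ({ω | a < (∑ j, ξ j ω) - ξ i ω ∧ ∀ j ≠ i, ξ j ω ≤ b} ∩ {ω | c < ξ i ω}) =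
      μ.real {ω | a < (∑ j, ξ j ω) - ξ i ω ∧ ∀ j ≠ i, ξ j ω ≤ b} * μ.real {ω | c < ξ i ω} := by
  classical
  have hothers : {ω | a < (∑ j, ξ j ω) - ξ i ω ∧ ∀ j ≠ i, ξ j ω ≤ b} =
      (fun ω (j : Finset.univ.erase i) => ξ j ω) ⁻¹' {v | a < ∑ j, v j ∧ ∀ j, v j ≤ b} := by
    ext ω
    simp [Finset.sum_attach (Finset.univ.erase i) (fun j => ξ j ω),
      Finset.sum_erase_eq_sub (Finset.mem_univ i)]
  have ht : MeasurableSet {v : Finset.univ.erase i → ℝ | a < ∑ j, v j ∧ ∀ j, v j ≤ b} := by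
    measurability
  rw [hothers, measureReal_def, measureReal_def, measureReal_def, ← ENNReal.toReal_mul]
  exact congrArg ENNReal.toReal (hind.measure_inter_preimage_erase hmeas i ht measurableSet_Ioi)

lemma iIndepFun.measureReal_lt_sum_inter_exists_lt_le (hind : iIndepFun ξ μ)
    (hmeas : ∀ i, Measurable (ξ i)) (a b c : ℝ) :
    μ.real {ω | (a < ∑ j, ξ j ω ∧ ∀ j, ξ j ω ≤ b) ∧ ∃ i, c < ξ i ω} ≤
      ∑ i, μ.real {ω | a - b < (∑ j, ξ j ω) - ξ i ω ∧ ∀ j ≠ i, ξ j ω ≤ b} *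
        μ.real {ω | c < ξ i ω} := by
  have := hind.isProbabilityMeasure
  have hcover : {ω | (a < ∑ j, ξ j ω ∧ ∀ j, ξ j ω ≤ b) ∧ ∃ i, c < ξ i ω} ⊆
      ⋃ i, {ω | a - b < (∑ j, ξ j ω) - ξ i ω ∧ ∀ j ≠ i, ξ j ω ≤ b} ∩ {ω | c < ξ i ω} := by
    rintro ω ⟨⟨hsum, hle⟩, i, hci⟩
    exact Set.mem_iUnion.2 ⟨i, ⟨by linarith [hle i], fun j _ => hle j⟩, hci⟩
  calc _ ≤ _ := measureReal_mono hcover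
    _ ≤ _ := measureReal_iUnion_fintype_le _
    _ = _ := Finset.sum_congr rfl fun i _ => hind.measureReal_sub_inter_lt hmeas i _ _ _

lemma iIndepFun.measureReal_lt_sum_inter_exists_lt_le_two_mul (hind : iIndepFun ξ μ)
    (hmeas : ∀ i, Measurable (ξ i)) {a b c q : ℝ}
    (hq_sub : ∀ i, μ.real {ω | a - b < (∑ j, ξ j ω) - ξ i ω ∧ ∀ j ≠ i, ξ j ω ≤ b} ≤ q)
    (hq : μ.real {ω | a < ∑ j, ξ j ω ∧ ∀ j, ξ j ω ≤ b} ≤ q) :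
    μ.real {ω | (a < ∑ j, ξ j ω ∧ ∀ j, ξ j ω ≤ b) ∧ ∃ i, c < ξ i ω} ≤
      2 * q * μ.real {ω | ∃ i, c < ξ i ω} := by
  have := hind.isProbabilityMeasure
  have hq0 : 0 ≤ q := measureReal_nonneg.trans hq
  by_cases hhalf : 1 / 2 ≤ μ.real {ω | ∃ i, c < ξ i ω}
  · calc _ ≤ μ.real {ω | a < ∑ j, ξ j ω ∧ ∀ j, ξ j ω ≤ b} := measureReal_mono fun ω hω => hω.1
      _ ≤ q := hq
      _ ≤ 2 * q * μ.real {ω | ∃ i, c < ξ i ω} := by nlinarith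
  · set p : ι → ℝ := fun i => μ.real {ω | c < ξ i ω}
    have hW := hind.measureReal_exists_lt hmeas c
    have hsum : ∑ i, p i ≤ 2 * μ.real {ω | ∃ i, c < ξ i ω} := by
      rw [hW]
      exact sum_le_two_mul_one_sub_prod _ (fun i _ => measureReal_nonneg)
        (fun i _ => measureReal_le_one) (by linarith)
    calc _ ≤ ∑ i, μ.real {ω | a - b < (∑ j, ξ j ω) - ξ i ω ∧ ∀ j ≠ i, ξ j ω ≤ b} * p i :=
          hind.measureReal_lt_sum_inter_exists_lt_le hmeas a b c
      _ ≤ ∑ i, q * p i := Finset.sum_le_sum fun i _ =>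
          mul_le_mul_of_nonneg_right (hq_sub i) measureReal_nonneg
      _ = q * ∑ i, p i := (Finset.mul_sum _ _ _).symm
      _ ≤ 2 * q * μ.real {ω | ∃ i, c < ξ i ω} := by nlinarith

end ProbabilityTheory

lemma measureReal_lt_sum_le_add {Ω ι : Type*} [MeasurableSpace Ω] {μ : Measure Ω}
    [IsFiniteMeasure μ] [Fintype ι] {ξ ξbar : ι → Ω → ℝ} {w : ℝ}
    (heq : ∀ i ω, ξ i ω ≤ w → ξbar i ω = ξ i ω) (a b : ℝ) :
    μ.real {ω | a < ∑ i, ξ i ω} ≤ μ.real {ω | a < ∑ i, ξbar i ω} +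
      μ.real {ω | ∃ i, b < ξ i ω} +
      μ.real {ω | (a < ∑ j, ξ j ω ∧ ∀ j, ξ j ω ≤ b) ∧ ∃ i, w < ξ i ω} := by
  have hcover : {ω | a < ∑ i, ξ i ω} ⊆ {ω | a < ∑ i, ξbar i ω} ∪ {ω | ∃ i, b < ξ i ω} ∪
      {ω | (a < ∑ j, ξ j ω ∧ ∀ j, ξ j ω ≤ b) ∧ ∃ i, w < ξ i ω} := by
    intro ω (hsum : a < ∑ i, ξ i ω)
    by_cases hw : ∃ i, w < ξ i ω
    · by_cases hb : ∃ i, b < ξ i ω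
      · exact Or.inl (Or.inr hb)
      · exact Or.inr ⟨⟨hsum, fun j => not_lt.1 fun h => hb ⟨j, h⟩⟩, hw⟩
    · have hbar : ∀ i, ξbar i ω = ξ i ω := fun i => heq i ω (not_lt.1 fun h => hw ⟨i, h⟩)
      refine Or.inl (Or.inl ?_)
      show a < ∑ i, ξbar i ω
      simpa only [hbar] using hsum
  calc _ ≤ _ := measureReal_mono hcover
    _ ≤ _ := measureReal_union_le _ _
    _ ≤ _ := by gcongr; exact measureReal_union_le _ _

theorem stmt_11_general {Ω : Type*} [MeasurableSpace Ω] (μ : Measure Ω) [IsProbabilityMeasure μ]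
    (n : ℕ) (hn : 0 < n) (ξ ξbar : Fin n → Ω → ℝ) (hmeas : ∀ i, Measurable (ξ i))
    (hind : iIndepFun ξ μ)
    (w y : ℝ)
    (heq : ∀ i ω, ξ i ω ≤ w → ξbar i ω = ξ i ω)
    (z : ℝ)
    (Q Qstar : ℝ)
    (hQ : Q = (Finset.univ.sup' (Finset.univ_nonempty_iff.mpr (Fin.pos_iff_nonempty.mp hn))
      fun i => (μ {ω | z - y < (∑ j, ξ j ω) - ξ i ω ∧ ∀ j ≠ i, ξ j ω ≤ y}).toReal))
    (hQs : Qstar = max Q (μ {ω | z < ∑ j, ξ j ω ∧ ∀ j, ξ j ω ≤ y}).toReal) :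
    (μ {ω | z < ∑ i, ξ i ω}).toReal - (μ {ω | z < ∑ i, ξbar i ω}).toReal ≤
      (μ {ω | ∃ i, y < ξ i ω}).toReal + 2 * Qstar * (μ {ω | ∃ i, w < ξ i ω}).toReal := by
  simp only [← measureReal_def] at hQ hQs ⊢
  have hX := hind.measureReal_lt_sum_inter_exists_lt_le_two_mul hmeas (c := w)
    (fun i => hQs ▸ le_max_of_le_left (hQ ▸ Finset.le_sup' _ (Finset.mem_univ i)))
    (hQs ▸ le_max_right _ _)
  have hsplit := measureReal_lt_sum_le_add (μ := μ) heq z y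
  linarith

theorem stmt_11 {Ω : Type*} [MeasurableSpace Ω] (μ : Measure Ω) [IsProbabilityMeasure μ]
    (n : ℕ) (hn : 0 < n) (ξ ξbar : Fin n → Ω → ℝ) (hmeas : ∀ i, Measurable (ξ i))
    (hind : iIndepFun ξ μ)
    (w y : ℝ) (hwy : w < y)
    (heq : ∀ i ω, ξ i ω ≤ w → ξbar i ω = ξ i ω)
    (hle : ∀ᵐ ω ∂μ, ∀ i, ξbar i ω ≤ min (ξ i ω) w)
    (z : ℝ)
    (Q Qstar : ℝ)
    (hQ : Q = (Finset.univ.sup' (Finset.univ_nonempty_iff.mpr (Fin.pos_iff_nonempty.mp hn))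
      fun i => (μ {ω | z - y < (∑ j, ξ j ω) - ξ i ω ∧ ∀ j ≠ i, ξ j ω ≤ y}).toReal))
    (hQs : Qstar = max Q (μ {ω | z < ∑ j, ξ j ω ∧ ∀ j, ξ j ω ≤ y}).toReal) :
    (μ {ω | z < ∑ i, ξ i ω}).toReal - (μ {ω | z < ∑ i, ξbar i ω}).toReal ≤
      (μ {ω | ∃ i, y < ξ i ω}).toReal + 2 * Qstar * (μ {ω | ∃ i, w < ξ i ω}).toReal :=
  stmt_11_general μ n hn ξ ξbar hmeas hind w y heq z Q Qstar hQ hQs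
end

section
/- Let β ≥ 0 and define f(x, y) := ∫_{−∞}^{1} min(1, |x| + |t| + β) · |y| · 1_{|t| ≤ |y|} dt for real x, y. Then f(x, y) ≤ 2β y^2 + 3 g(x) + 3 g(y), where g(u) = min(u^2, |u|^3). -/
/-!
The integrand vanishes off `[-|y|, |y|]` and is bounded there by `min 1 (|x| + |y| + β) * |y|`,
so the integral is at most `2 * min 1 (|x| + |y| + β) * y ^ 2`. With `g = minSqCube`: for `|y| ≥ 1`
this is at most `2 * y ^ 2 ≤ 3 * g y`; for `|y| ≤ 1` we use the second argument of the minimum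
and `2 * |x| * y ^ 2 ≤ 3 * g x + |y| ^ 3`. For `|x| ≥ 1` the latter follows from `y ^ 2 ≤ 1 ≤ |x|`,
and for `|x| ≤ 1` from `3a³ - 2ab² + b³ = (a + b)(3a² - 3ab + b²) ≥ 0`.
-/

open MeasureTheory

theorem norm_setIntegral_le_of_eq_zero_outside {X E : Type*} [MeasurableSpace X]
    [NormedAddCommGroup E] [NormedSpace ℝ E] {μ : Measure X} {f : X → E} {s t : Set X} {M : ℝ}
    (ht : MeasurableSet t) (hμt : μ t < ⊤) (hf : ∀ x ∈ t, ‖f x‖ ≤ M) (hf0 : ∀ x ∉ t, f x = 0) :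
    ‖∫ x in s, f x ∂μ‖ ≤ M * μ.real t := by
  rcases t.eq_empty_or_nonempty with rfl | ⟨x₀, hx₀⟩
  · simp_all
  have hM : 0 ≤ M := (norm_nonneg _).trans (hf x₀ hx₀)
  have hft : t.indicator f = f :=
    Set.indicator_eq_self.2 fun x hx => by_contra fun h => hx (hf0 x h)
  rw [← hft, setIntegral_indicator ht]
  calc _ ≤ M * μ.real (s ∩ t) := norm_setIntegral_le_of_norm_le_const
        ((measure_mono Set.inter_subset_right).trans_lt hμt) fun x hx => hf x hx.2
    _ ≤ M * μ.real t := by gcongr; exacts [hμt.ne, Set.inter_subset_right]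

def minSqCube (u : ℝ) : ℝ := min (u ^ 2) (|u| ^ 3)

theorem minSqCube_nonneg (u : ℝ) : 0 ≤ minSqCube u := le_min (sq_nonneg u) (by positivity)

theorem minSqCube_of_abs_le_one {u : ℝ} (hu : |u| ≤ 1) : minSqCube u = |u| ^ 3 :=
  min_eq_right (by rw [← sq_abs]; nlinarith [abs_nonneg u])

theorem minSqCube_of_one_le_abs {u : ℝ} (hu : 1 ≤ |u|) : minSqCube u = u ^ 2 :=
  min_eq_left (by rw [← sq_abs]; nlinarith)

theorem two_mul_abs_mul_sq_le (a : ℝ) {b : ℝ} (hb : 0 ≤ b) (hb1 : b ≤ 1) :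
    2 * |a| * b ^ 2 ≤ 3 * minSqCube a + b ^ 3 := by
  have ha := abs_nonneg a
  rcases le_total |a| 1 with h | h
  · rw [minSqCube_of_abs_le_one h]
    nlinarith [mul_nonneg (add_nonneg ha hb) (by nlinarith [sq_nonneg (2 * |a| - b)] :
      (0:ℝ) ≤ 3 * |a| ^ 2 - 3 * |a| * b + b ^ 2)]
  · rw [minSqCube_of_one_le_abs h, ← sq_abs a]
    nlinarith [mul_nonneg ha hb]

theorem two_mul_min_mul_sq_le {β : ℝ} (hβ : 0 ≤ β) (x y : ℝ) :
    2 * min 1 (|x| + |y| + β) * y ^ 2 ≤ 2 * β * y ^ 2 + 3 * minSqCube x + 3 * minSqCube y := by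
  have hx := minSqCube_nonneg x
  rcases le_total |y| 1 with hy | hy
  · have := two_mul_abs_mul_sq_le x (abs_nonneg y) hy
    rw [minSqCube_of_abs_le_one hy, ← sq_abs y]
    nlinarith [min_le_right 1 (|x| + |y| + β), sq_nonneg y]
  · rw [minSqCube_of_one_le_abs hy]
    nlinarith [min_le_left 1 (|x| + |y| + β), sq_nonneg y]

theorem stmt_14 (β : ℝ) (hβ : 0 ≤ β) (x y : ℝ) :
    (∫ t in Set.Iic (1:ℝ),
        (if |t| ≤ |y| then min 1 (|x| + |t| + β) * |y| else 0)) ≤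
      2 * β * y ^ 2 + 3 * min (x ^ 2) (|x| ^ 3) + 3 * min (y ^ 2) (|y| ^ 3) := by
  have hsupp : ∀ t, t ∈ Set.Icc (-|y|) |y| ↔ |t| ≤ |y| := fun t => abs_le.symm
  have hbound := norm_setIntegral_le_of_eq_zero_outside (μ := volume) (s := Set.Iic 1)
    (f := fun t => if |t| ≤ |y| then min 1 (|x| + |t| + β) * |y| else 0)
    (M := min 1 (|x| + |y| + β) * |y|) measurableSet_Icc measure_Icc_lt_top
    (fun t ht => by
      rw [hsupp] at ht
      rw [if_pos ht, Real.norm_eq_abs, abs_of_nonneg (by positivity)]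
      gcongr)
    (fun t ht => if_neg ((hsupp t).not.1 ht))
  rw [Real.volume_real_Icc_of_le (by simp)] at hbound
  calc _ ≤ min 1 (|x| + |y| + β) * |y| * (|y| - -|y|) := (le_abs_self _).trans hbound
    _ = 2 * min 1 (|x| + |y| + β) * y ^ 2 := by rw [← sq_abs y]; ring
    _ ≤ _ := two_mul_min_mul_sq_le hβ x y
end

section
/- Let v > 0 and let ξ_1, …, ξ_n be random variables with Σ_i E ξ_i^2 = 1. Set β_v := Σ_i E g(ξ_i/v) with g(x) = min(x^2, |x|^3). If β_v ≤ 1/(2v^2) and δ := v^3 β_v / 2, then δ ∈ (0, v/4] and Σ_{i=1}^n E[|ξ_i|·min(|ξ_i|, δ)] ≥ 1/2. -/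
open MeasureTheory

lemma ptwise_bound (v δ x : ℝ) (hv : 0 < v) (hδ : 0 < δ) (hδv : δ ≤ v / 4) :
    x ^ 2 ≤ |x| * min |x| δ + v ^ 3 / (4 * δ) * min ((x / v) ^ 2) (|x / v| ^ 3) := by
  have h4δ : (0:ℝ) < 4 * δ := by linarith
  have hmin_nonneg : 0 ≤ min ((x / v) ^ 2) (|x / v| ^ 3) :=
    le_min (sq_nonneg _) (pow_nonneg (abs_nonneg _) 3)
  rcases le_or_gt |x| δ with h | h
  · rw [min_eq_left h]
    have hc : 0 ≤ v ^ 3 / (4 * δ) := by positivity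
    nlinarith [sq_abs x, mul_nonneg hc hmin_nonneg]
  · rw [min_eq_right h.le]
    rcases le_total ((x / v) ^ 2) (|x / v| ^ 3) with hm | hm
    · rw [min_eq_left hm]
      have key : v ^ 3 / (4 * δ) * (x / v) ^ 2 = v / (4 * δ) * x ^ 2 := by
        field_simp
      rw [key]
      have h1 : 1 ≤ v / (4 * δ) := (one_le_div h4δ).mpr (by linarith)
      have h2 := le_mul_of_one_le_left (sq_nonneg x) h1
      have h3 : 0 ≤ |x| * δ := mul_nonneg (abs_nonneg x) hδ.le
      linarith
    · rw [min_eq_right hm]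
      have habs : |x / v| = |x| / v := by rw [abs_div, abs_of_pos hv]
      rw [habs]
      have key : v ^ 3 / (4 * δ) * (|x| / v) ^ 3 = |x| ^ 3 / (4 * δ) := by
        field_simp
      rw [key]
      have hd : x ^ 2 - |x| * δ ≤ |x| ^ 3 / (4 * δ) := by
        rw [le_div_iff₀ h4δ]
        nlinarith [mul_nonneg (abs_nonneg x) (sq_nonneg (|x| - 2 * δ)), sq_abs x]
      linarith

theorem stmt_16 {Ω : Type*} [MeasurableSpace Ω] (μ : Measure Ω) [IsProbabilityMeasure μ]
    (v : ℝ) (hv : 0 < v)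
    (n : ℕ) (ξ : Fin n → Ω → ℝ) (hmeas : ∀ i, Measurable (ξ i))
    (hint : ∀ i, Integrable (fun ω => ξ i ω ^ 2) μ)
    (hsum : ∑ i, ∫ ω, ξ i ω ^ 2 ∂μ = 1)
    (βv : ℝ) (hβv : βv = ∑ i, ∫ ω, min ((ξ i ω / v) ^ 2) (|ξ i ω / v| ^ 3) ∂μ)
    (hβ : βv ≤ 1 / (2 * v ^ 2))
    (δ : ℝ) (hδ : δ = v ^ 3 * βv / 2) :
    (0 < δ ∧ δ ≤ v / 4) ∧
    (1 : ℝ) / 2 ≤ ∑ i, ∫ ω, |ξ i ω| * min |ξ i ω| δ ∂μ := by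
  -- nonnegativity of g pointwise
  have hg_nonneg : ∀ (i : Fin n) (ω : Ω),
      0 ≤ min ((ξ i ω / v) ^ 2) (|ξ i ω / v| ^ 3) := fun i ω =>
    le_min (sq_nonneg _) (pow_nonneg (abs_nonneg _) 3)
  -- integrability of g
  have hg_int : ∀ i, Integrable (fun ω => min ((ξ i ω / v) ^ 2) (|ξ i ω / v| ^ 3)) μ := by
    intro i
    have hmg : Measurable (fun ω => min ((ξ i ω / v) ^ 2) (|ξ i ω / v| ^ 3)) :=
      Measurable.min (((hmeas i).div_const v).pow_const 2)
        ((((hmeas i).div_const v).abs).pow_const 3)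
    have hdom : Integrable (fun ω => (ξ i ω / v) ^ 2) μ := by
      simpa [div_pow] using (hint i).div_const (v ^ 2)
    refine hdom.mono hmg.aestronglyMeasurable ?_
    filter_upwards with ω
    simp only [Real.norm_eq_abs]
    have h1 : |min ((ξ i ω / v) ^ 2) (|ξ i ω / v| ^ 3)| = min ((ξ i ω / v) ^ 2) (|ξ i ω / v| ^ 3) :=
      abs_of_nonneg (hg_nonneg i ω)
    rw [h1]
    exact (min_le_left _ _).trans (le_abs_self _)
  -- each ∫ g_i ≥ 0
  have hterm_nonneg : ∀ i, 0 ≤ ∫ ω, min ((ξ i ω / v) ^ 2) (|ξ i ω / v| ^ 3) ∂μ :=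
    fun i => integral_nonneg (fun ω => hg_nonneg i ω)
  -- βv > 0
  have hβpos : 0 < βv := by
    obtain ⟨i, -, hi⟩ := Finset.exists_ne_zero_of_sum_ne_zero
      (by rw [hsum]; norm_num : ∑ i, ∫ ω, ξ i ω ^ 2 ∂μ ≠ 0)
    have hξpos : 0 < ∫ ω, ξ i ω ^ 2 ∂μ :=
      lt_of_le_of_ne (integral_nonneg fun ω => sq_nonneg _) (Ne.symm hi)
    have hIpos : 0 < ∫ ω, min ((ξ i ω / v) ^ 2) (|ξ i ω / v| ^ 3) ∂μ := by
      rcases lt_or_eq_of_le (hterm_nonneg i) with h | h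
      · exact h
      · exfalso
        have hae := (integral_eq_zero_iff_of_nonneg (fun ω => hg_nonneg i ω) (hg_int i)).mp h.symm
        have : (fun ω => ξ i ω ^ 2) =ᵐ[μ] 0 := by
          filter_upwards [hae] with ω hω
          simp only [Pi.zero_apply] at hω ⊢
          by_contra hne
          have hxne : ξ i ω ≠ 0 := fun h0 => hne (by rw [h0]; ring)
          have h1 : 0 < (ξ i ω / v) ^ 2 := by positivity
          have h2 : 0 < |ξ i ω / v| ^ 3 := by positivity
          have := lt_min h1 h2
          rw [hω] at this
          exact lt_irrefl 0 this
        rw [integral_congr_ae this] at hξpos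
        simp at hξpos
    calc (0:ℝ) < ∫ ω, min ((ξ i ω / v) ^ 2) (|ξ i ω / v| ^ 3) ∂μ := hIpos
      _ ≤ βv := by
          rw [hβv]
          exact Finset.single_le_sum (fun j _ => hterm_nonneg j) (Finset.mem_univ i)
  have hδpos : 0 < δ := by rw [hδ]; positivity
  have hδle : δ ≤ v / 4 := by
    have h2 : v ^ 3 * βv ≤ v ^ 3 * (1 / (2 * v ^ 2)) :=
      mul_le_mul_of_nonneg_left hβ (by positivity)
    have h3 : v ^ 3 * (1 / (2 * v ^ 2)) = v / 2 := by field_simp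
    rw [hδ]
    linarith [h2, h3.le]
  refine ⟨⟨hδpos, hδle⟩, ?_⟩
  -- integrability of f
  have hf_int : ∀ i, Integrable (fun ω => |ξ i ω| * min |ξ i ω| δ) μ := by
    intro i
    have hmf : Measurable (fun ω => |ξ i ω| * min |ξ i ω| δ) :=
      ((hmeas i).abs).mul (Measurable.min (hmeas i).abs measurable_const)
    refine (hint i).mono hmf.aestronglyMeasurable ?_
    filter_upwards with ω
    simp only [Real.norm_eq_abs]
    have h1 : |(|ξ i ω| * min |ξ i ω| δ)| = |ξ i ω| * min |ξ i ω| δ :=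
      abs_of_nonneg (mul_nonneg (abs_nonneg _) (le_min (abs_nonneg _) hδpos.le))
    rw [h1]
    calc |ξ i ω| * min |ξ i ω| δ ≤ |ξ i ω| * |ξ i ω| :=
          mul_le_mul_of_nonneg_left (min_le_left _ _) (abs_nonneg _)
      _ = ξ i ω ^ 2 := by rw [← sq_abs]; ring
      _ ≤ |ξ i ω ^ 2| := le_abs_self _
  set c : ℝ := v ^ 3 / (4 * δ) with hc
  -- per-index integral bound
  have hkey : ∀ i, ∫ ω, ξ i ω ^ 2 ∂μ ≤
      (∫ ω, |ξ i ω| * min |ξ i ω| δ ∂μ) +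
      c * ∫ ω, min ((ξ i ω / v) ^ 2) (|ξ i ω / v| ^ 3) ∂μ := by
    intro i
    have hrhs : Integrable (fun ω => |ξ i ω| * min |ξ i ω| δ +
        c * min ((ξ i ω / v) ^ 2) (|ξ i ω / v| ^ 3)) μ :=
      (hf_int i).add ((hg_int i).const_mul c)
    have hle := integral_mono (hint i) hrhs
      (fun ω => ptwise_bound v δ (ξ i ω) hv hδpos hδle)
    rwa [integral_add (hf_int i) ((hg_int i).const_mul c), integral_const_mul] at hle
  have hsum_le : (1:ℝ) ≤ (∑ i, ∫ ω, |ξ i ω| * min |ξ i ω| δ ∂μ) + c * βv := by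
    calc (1:ℝ) = ∑ i, ∫ ω, ξ i ω ^ 2 ∂μ := hsum.symm
      _ ≤ ∑ i, ((∫ ω, |ξ i ω| * min |ξ i ω| δ ∂μ) +
            c * ∫ ω, min ((ξ i ω / v) ^ 2) (|ξ i ω / v| ^ 3) ∂μ) :=
          Finset.sum_le_sum (fun i _ => hkey i)
      _ = (∑ i, ∫ ω, |ξ i ω| * min |ξ i ω| δ ∂μ) + c * βv := by
          rw [Finset.sum_add_distrib, ← Finset.mul_sum, hβv]
  have hcβ : c * βv = 1 / 2 := by
    rw [hc]
    have h2δ : v ^ 3 * βv = 2 * δ := by rw [hδ]; ring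
    field_simp
    linarith [h2δ]
  linarith [hsum_le, hcβ.le]
end
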